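/- arXiv:2503.23940 — 3 statements merged into one kernel-verified Lean document; each statement's English description precedes it below -/
import Mathlib

section
/- Let f₁ and f₂ be functions in L²([0,1]) with respect to the Lebesgue measure. For a partition P given by 0 = a_0 < a_1 < … < a_l = 1, define S_P = ∑_{j=1}^l (∫_{a_{j-1}}^{a_j} f₁(x) dx)·(∫_{a_{j-1}}^{a_j} f₂(x) dx)/(a_j − a_{j-1}). Then the limit of S_P as the mesh ‖P‖ tends to 0 exists and equals ∫_0^1 f₁(x) f₂(x) dx; that is, for every ε > 0 there exists δ > 0 such that every partition with mesh < δ satisfies |S_P − ∫_0^1 f₁ f₂| < ε. -/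
/-!
The partition sum `S_P(f, g)` is bilinear, and Cauchy–Schwarz, applied first on each cell
`[a_{j-1}, a_j]` and then to the sum over the cells, gives `|S_P(f, g)| ≤ ‖f‖₂ ‖g‖₂` uniformly
in `P`. Hence `S_P(f, g) - ∫ f g` is a bilinear form bounded by `2 ‖f‖₂ ‖g‖₂`, and it suffices
to show that it tends to `0` for continuous `f, g`, which are dense in `L²`. On a cell `I` of
length `|I|`, with averages `c₁, c₂`, the error term equals `-∫_I (g₁ - c₁)(g₂ - c₂)`, which is
at most `ω₁ ω₂ |I|` when `ω₁, ω₂` bound the oscillations of `g₁, g₂` on `I`.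
-/

open MeasureTheory Finset

/-- A partition of `[a,b]`: a finite increasing sequence `a = p 0 < p 1 < … < p l = b`. -/
def IsPartition (a b : ℝ) (l : ℕ) (p : ℕ → ℝ) : Prop :=
  p 0 = a ∧ p l = b ∧ ∀ j, j < l → p j < p (j + 1)

noncomputable def partitionSum (l : ℕ) (p : ℕ → ℝ) (f g : ℝ → ℝ) : ℝ :=
  ∑ j ∈ range l, (∫ x in p j..p (j + 1), f x) * (∫ x in p j..p (j + 1), g x) / (p (j + 1) - p j)

noncomputable def partitionError (a b : ℝ) (l : ℕ) (p : ℕ → ℝ) (f g : ℝ → ℝ) : ℝ :=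
  partitionSum l p f g - ∫ x in a..b, f x * g x

theorem partitionError_comm (a b : ℝ) (l : ℕ) (p : ℕ → ℝ) (f g : ℝ → ℝ) :
    partitionError a b l p f g = partitionError a b l p g f := by
  simp only [partitionError, partitionSum, mul_comm]

theorem abs_integral_mul_le_sqrt_mul_sqrt {α : Type*} [MeasurableSpace α] {μ : Measure α}
    {f g : α → ℝ} (hf : MemLp f 2 μ) (hg : MemLp g 2 μ) :
    |∫ x, f x * g x ∂μ| ≤ √(∫ x, f x ^ 2 ∂μ) * √(∫ x, g x ^ 2 ∂μ) := by
  have hsqrt (h : α → ℝ) : (∫ x, ‖h x‖ ^ (2 : ℝ) ∂μ) ^ (1 / (2 : ℝ)) = √(∫ x, h x ^ 2 ∂μ) := by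
    simp only [Real.rpow_two, Real.norm_eq_abs, sq_abs, Real.sqrt_eq_rpow]
  rw [← ENNReal.ofReal_ofNat 2] at hf hg
  calc |∫ x, f x * g x ∂μ| ≤ ∫ x, |f x * g x| ∂μ := abs_integral_le_integral_abs
    _ = ∫ x, ‖f x‖ * ‖g x‖ ∂μ := by simp only [abs_mul, Real.norm_eq_abs]
    _ ≤ _ := integral_mul_norm_le_Lp_mul_Lq Real.HolderConjugate.two_two hf hg
    _ = _ := by rw [hsqrt f, hsqrt g]

section Interval

variable {a b : ℝ} {f g : ℝ → ℝ}

theorem abs_intervalIntegral_mul_le_sqrt_mul_sqrt (hab : a ≤ b)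
    (hf : MemLp f 2 (volume.restrict (Set.Icc a b)))
    (hg : MemLp g 2 (volume.restrict (Set.Icc a b))) :
    |∫ x in a..b, f x * g x| ≤ √(∫ x in a..b, f x ^ 2) * √(∫ x in a..b, g x ^ 2) := by
  simp only [intervalIntegral.integral_of_le hab, ← integral_Icc_eq_integral_Ioc]
  exact abs_integral_mul_le_sqrt_mul_sqrt hf hg

theorem sq_intervalIntegral_le (hab : a ≤ b) (hf : MemLp f 2 (volume.restrict (Set.Icc a b))) :
    (∫ x in a..b, f x) ^ 2 ≤ (b - a) * ∫ x in a..b, f x ^ 2 := by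
  have h := abs_intervalIntegral_mul_le_sqrt_mul_sqrt hab hf (memLp_const 1)
  simp only [mul_one, one_pow, intervalIntegral.integral_const, smul_eq_mul] at h
  calc (∫ x in a..b, f x) ^ 2 = |∫ x in a..b, f x| ^ 2 := (sq_abs _).symm
    _ ≤ (√(∫ x in a..b, f x ^ 2) * √(b - a)) ^ 2 := pow_le_pow_left₀ (abs_nonneg _) h 2
    _ = (b - a) * ∫ x in a..b, f x ^ 2 := by
      rw [mul_pow, Real.sq_sqrt (intervalIntegral.integral_nonneg hab fun x _ => sq_nonneg (f x)),
        Real.sq_sqrt (sub_nonneg.2 hab), mul_comm]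

theorem abs_intervalIntegral_div_sub_le {c ω : ℝ} (hab : a < b)
    (hg : IntervalIntegrable g volume a b) (hω : ∀ y ∈ Set.Ioc a b, |g y - c| ≤ ω) :
    |(∫ x in a..b, g x) / (b - a) - c| ≤ ω := by
  have hba : 0 < b - a := sub_pos.2 hab
  have hsub : (∫ x in a..b, g x) / (b - a) - c = (∫ x in a..b, (g x - c)) / (b - a) := by
    rw [intervalIntegral.integral_sub hg intervalIntegrable_const, intervalIntegral.integral_const,
      smul_eq_mul]
    field_simp
  rw [hsub, abs_div, abs_of_pos hba, div_le_iff₀ hba, ← abs_of_pos hba]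
  exact intervalIntegral.norm_integral_le_of_norm_le_const (f := fun x => g x - c)
    (by simpa only [Set.uIoc_of_le hab.le, Real.norm_eq_abs] using hω)

theorem integral_mul_integral_div_sub_integral_mul {g₁ g₂ : ℝ → ℝ} (hab : a ≠ b)
    (hg₁ : IntervalIntegrable g₁ volume a b) (hg₂ : IntervalIntegrable g₂ volume a b)
    (hg₁₂ : IntervalIntegrable (fun x => g₁ x * g₂ x) volume a b) :
    (∫ x in a..b, g₁ x) * (∫ x in a..b, g₂ x) / (b - a) - ∫ x in a..b, g₁ x * g₂ x
      = -∫ x in a..b, (g₁ x - (∫ y in a..b, g₁ y) / (b - a))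
          * (g₂ x - (∫ y in a..b, g₂ y) / (b - a)) := by
  set c₁ := (∫ x in a..b, g₁ x) / (b - a)
  set c₂ := (∫ x in a..b, g₂ x) / (b - a)
  have hexpand : ∀ x, (g₁ x - c₁) * (g₂ x - c₂)
      = g₁ x * g₂ x - (c₂ * g₁ x + c₁ * g₂ x) + c₁ * c₂ := fun x => by ring
  have hlin := (hg₁.const_mul c₂).add (hg₂.const_mul c₁)
  simp_rw [hexpand]
  rw [intervalIntegral.integral_add (hg₁₂.sub hlin) intervalIntegrable_const,
    intervalIntegral.integral_sub hg₁₂ hlin,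
    intervalIntegral.integral_add (hg₁.const_mul c₂) (hg₂.const_mul c₁),
    intervalIntegral.integral_const_mul, intervalIntegral.integral_const_mul,
    intervalIntegral.integral_const, smul_eq_mul]
  have hba : b - a ≠ 0 := sub_ne_zero.2 hab.symm
  simp only [c₁, c₂]
  field_simp
  ring

theorem abs_integral_mul_integral_div_sub_integral_mul_le {g₁ g₂ : ℝ → ℝ} {ω₁ ω₂ : ℝ}
    (hab : a < b) (hg₁ : ContinuousOn g₁ (Set.Icc a b)) (hg₂ : ContinuousOn g₂ (Set.Icc a b))
    (hω₁ : ∀ x ∈ Set.Icc a b, ∀ y ∈ Set.Icc a b, |g₁ x - g₁ y| ≤ ω₁)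
    (hω₂ : ∀ x ∈ Set.Icc a b, ∀ y ∈ Set.Icc a b, |g₂ x - g₂ y| ≤ ω₂) :
    |(∫ x in a..b, g₁ x) * (∫ x in a..b, g₂ x) / (b - a) - ∫ x in a..b, g₁ x * g₂ x|
      ≤ ω₁ * ω₂ * (b - a) := by
  have hintegrable {h : ℝ → ℝ} (hh : ContinuousOn h (Set.Icc a b)) :
      IntervalIntegrable h volume a b :=
    hh.intervalIntegrable_of_Icc hab.le
  have hdev {h : ℝ → ℝ} {ω : ℝ} (hh : ContinuousOn h (Set.Icc a b))
      (hω : ∀ x ∈ Set.Icc a b, ∀ y ∈ Set.Icc a b, |h x - h y| ≤ ω) :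
      ∀ x ∈ Set.Ioc a b, |h x - (∫ y in a..b, h y) / (b - a)| ≤ ω := fun x hx => by
    rw [abs_sub_comm]
    exact abs_intervalIntegral_div_sub_le hab (hintegrable hh) fun y hy =>
      hω y (Set.Ioc_subset_Icc_self hy) x (Set.Ioc_subset_Icc_self hx)
  have hω₁0 : 0 ≤ ω₁ := (abs_nonneg _).trans (hω₁ a ⟨le_rfl, hab.le⟩ a ⟨le_rfl, hab.le⟩)
  rw [integral_mul_integral_div_sub_integral_mul hab.ne (hintegrable hg₁) (hintegrable hg₂)
    (hintegrable (hg₁.mul hg₂)), abs_neg, ← Real.norm_eq_abs]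
  refine (intervalIntegral.norm_integral_le_of_norm_le_const fun x hx => ?_).trans_eq
    (by rw [abs_of_pos (sub_pos.2 hab)])
  rw [Set.uIoc_of_le hab.le] at hx
  rw [norm_mul]
  exact mul_le_mul (hdev hg₁ hω₁ x hx) (hdev hg₂ hω₂ x hx) (norm_nonneg _) hω₁0

theorem MeasureTheory.MemLp.exists_continuous_sqrt_intervalIntegral_sq_sub_le (hab : a ≤ b)
    (hf : MemLp f 2 (volume.restrict (Set.Icc a b))) {η : ℝ} (hη : 0 < η) :
    ∃ g : ℝ → ℝ, Continuous g ∧ MemLp g 2 (volume.restrict (Set.Icc a b)) ∧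
      √(∫ x in a..b, (f - g) x ^ 2) ≤ η := by
  rw [← ENNReal.ofReal_ofNat 2] at hf
  obtain ⟨g, -, hfg, hg, hgLp⟩ :=
    hf.exists_hasCompactSupport_integral_rpow_sub_le two_pos (pow_pos hη 2)
  refine ⟨g, hg, ENNReal.ofReal_ofNat 2 ▸ hgLp, ?_⟩
  rw [intervalIntegral.integral_of_le hab, ← integral_Icc_eq_integral_Ioc, ← Real.sqrt_sq hη.le]
  refine Real.sqrt_le_sqrt (le_of_eq_of_le ?_ hfg)
  simp only [Pi.sub_apply, Real.rpow_two, Real.norm_eq_abs, sq_abs]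

end Interval

namespace IsPartition

variable {a b : ℝ} {l : ℕ} {p : ℕ → ℝ} {f g h : ℝ → ℝ}

theorem le_of_le (hP : IsPartition a b l p) {i j : ℕ} (hij : i ≤ j) (hjl : j ≤ l) :
    p i ≤ p j := by
  induction j, hij using Nat.le_induction with
  | base => rfl
  | succ k _ ih => exact (ih (by omega)).trans (hP.2.2 k (by omega)).le

theorem left_le_right (hP : IsPartition a b l p) : a ≤ b :=
  hP.1 ▸ hP.2.1 ▸ hP.le_of_le (Nat.zero_le l) le_rfl

theorem Icc_subset (hP : IsPartition a b l p) {j : ℕ} (hj : j < l) :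
    Set.Icc (p j) (p (j + 1)) ⊆ Set.Icc a b :=
  Set.Icc_subset_Icc (hP.1 ▸ hP.le_of_le (Nat.zero_le j) hj.le) (hP.2.1 ▸ hP.le_of_le hj le_rfl)

theorem sum_sub (hP : IsPartition a b l p) : ∑ j ∈ range l, (p (j + 1) - p j) = b - a := by
  rw [sum_range_sub, hP.1, hP.2.1]

theorem intervalIntegrable (hP : IsPartition a b l p) (hf : IntegrableOn f (Set.Icc a b))
    {j : ℕ} (hj : j < l) : IntervalIntegrable f volume (p j) (p (j + 1)) :=
  (intervalIntegrable_iff_integrableOn_Icc_of_le (hP.2.2 j hj).le).2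
    (hf.mono_set (hP.Icc_subset hj))

theorem sum_intervalIntegral (hP : IsPartition a b l p) (hf : IntegrableOn f (Set.Icc a b)) :
    ∑ j ∈ range l, ∫ x in p j..p (j + 1), f x = ∫ x in a..b, f x := by
  rw [intervalIntegral.sum_integral_adjacent_intervals (a := p) fun j hj =>
      hP.intervalIntegrable hf hj,
    hP.1, hP.2.1]

theorem sum_sq_intervalIntegral_div_le (hP : IsPartition a b l p)
    (hf : MemLp f 2 (volume.restrict (Set.Icc a b))) :
    ∑ j ∈ range l, (∫ x in p j..p (j + 1), f x) ^ 2 / (p (j + 1) - p j)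
      ≤ ∫ x in a..b, f x ^ 2 := by
  rw [← hP.sum_intervalIntegral hf.integrable_sq]
  refine sum_le_sum fun j hj => ?_
  have hj := mem_range.1 hj
  rw [div_le_iff₀' (sub_pos.2 (hP.2.2 j hj))]
  exact sq_intervalIntegral_le (hP.2.2 j hj).le
    (hf.mono_measure (Measure.restrict_mono (hP.Icc_subset hj) le_rfl))

theorem abs_partitionSum_le (hP : IsPartition a b l p)
    (hf : MemLp f 2 (volume.restrict (Set.Icc a b)))
    (hg : MemLp g 2 (volume.restrict (Set.Icc a b))) :
    |partitionSum l p f g| ≤ √(∫ x in a..b, f x ^ 2) * √(∫ x in a..b, g x ^ 2) := by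
  have hΔ : ∀ j ∈ range l, 0 ≤ p (j + 1) - p j := fun j hj =>
    sub_nonneg.2 (hP.2.2 j (mem_range.1 hj)).le
  have hterm (u : ℝ → ℝ) :
      ∀ j ∈ range l, 0 ≤ (∫ x in p j..p (j + 1), u x) ^ 2 / (p (j + 1) - p j) :=
    fun j hj => div_nonneg (sq_nonneg _) (hΔ j hj)
  have hsq (u : ℝ → ℝ) : 0 ≤ ∫ x in a..b, u x ^ 2 :=
    intervalIntegral.integral_nonneg hP.left_le_right fun x _ => sq_nonneg _
  rw [← Real.sqrt_mul (hsq f)]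
  refine Real.abs_le_sqrt ((sum_sq_le_sum_mul_sum_of_sq_le_mul _ (hterm f) (hterm g)
    fun j _ => le_of_eq (by ring)).trans ?_)
  exact mul_le_mul (hP.sum_sq_intervalIntegral_div_le hf) (hP.sum_sq_intervalIntegral_div_le hg)
    (sum_nonneg (hterm g)) (hsq f)

theorem abs_partitionError_le (hP : IsPartition a b l p)
    (hf : MemLp f 2 (volume.restrict (Set.Icc a b)))
    (hg : MemLp g 2 (volume.restrict (Set.Icc a b))) :
    |partitionError a b l p f g| ≤ 2 * (√(∫ x in a..b, f x ^ 2) * √(∫ x in a..b, g x ^ 2)) := by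
  have hS := hP.abs_partitionSum_le hf hg
  have hI := abs_intervalIntegral_mul_le_sqrt_mul_sqrt hP.left_le_right hf hg
  exact (abs_sub _ _).trans (by linarith)

theorem partitionError_sub_left (hP : IsPartition a b l p)
    (hf : MemLp f 2 (volume.restrict (Set.Icc a b)))
    (hg : MemLp g 2 (volume.restrict (Set.Icc a b)))
    (hh : MemLp h 2 (volume.restrict (Set.Icc a b))) :
    partitionError a b l p (f - g) h = partitionError a b l p f h - partitionError a b l p g h := by
  have hIntOn {u : ℝ → ℝ} (hu : MemLp u 2 (volume.restrict (Set.Icc a b))) :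
      IntegrableOn u (Set.Icc a b) := hu.integrable one_le_two
  have hSum : partitionSum l p (f - g) h = partitionSum l p f h - partitionSum l p g h := by
    simp only [partitionSum, ← sum_sub_distrib]
    refine sum_congr rfl fun j hj => ?_
    have hj := mem_range.1 hj
    rw [Pi.sub_def, intervalIntegral.integral_sub (hP.intervalIntegrable (hIntOn hf) hj)
      (hP.intervalIntegrable (hIntOn hg) hj)]
    ring
  have hInt : ∫ x in a..b, (f - g) x * h x = (∫ x in a..b, f x * h x) - ∫ x in a..b, g x * h x := by
    simp only [Pi.sub_apply, sub_mul]
    exact intervalIntegral.integral_sub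
      ((intervalIntegrable_iff_integrableOn_Icc_of_le hP.left_le_right).2 (hf.integrable_mul hh))
      ((intervalIntegrable_iff_integrableOn_Icc_of_le hP.left_le_right).2 (hg.integrable_mul hh))
  simp only [partitionError, hSum, hInt]
  ring

theorem partitionError_sub_right (hP : IsPartition a b l p)
    (hf : MemLp f 2 (volume.restrict (Set.Icc a b)))
    (hg : MemLp g 2 (volume.restrict (Set.Icc a b)))
    (hh : MemLp h 2 (volume.restrict (Set.Icc a b))) :
    partitionError a b l p f (g - h) = partitionError a b l p f g - partitionError a b l p f h := by
  rw [partitionError_comm, hP.partitionError_sub_left hg hh hf, partitionError_comm,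
    partitionError_comm _ _ _ _ h]

theorem abs_partitionError_le_of_oscillation {g₁ g₂ : ℝ → ℝ} {δ ω₁ ω₂ : ℝ}
    (hP : IsPartition a b l p)
    (hg₁ : ContinuousOn g₁ (Set.Icc a b)) (hg₂ : ContinuousOn g₂ (Set.Icc a b))
    (hω₁ : ∀ x ∈ Set.Icc a b, ∀ y ∈ Set.Icc a b, dist x y < δ → dist (g₁ x) (g₁ y) < ω₁)
    (hω₂ : ∀ x ∈ Set.Icc a b, ∀ y ∈ Set.Icc a b, dist x y < δ → dist (g₂ x) (g₂ y) < ω₂)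
    (hmesh : ∀ j, j < l → p (j + 1) - p j < δ) :
    |partitionError a b l p g₁ g₂| ≤ ω₁ * ω₂ * (b - a) := by
  rw [partitionError, partitionSum,
    ← hP.sum_intervalIntegral (f := fun x => g₁ x * g₂ x) (hg₁.mul hg₂).integrableOn_Icc,
    ← sum_sub_distrib, ← hP.sum_sub, mul_sum]
  refine (abs_sum_le_sum_abs _ _).trans (sum_le_sum fun j hj => ?_)
  have hj := mem_range.1 hj
  have hsub := hP.Icc_subset hj
  have hosc {g : ℝ → ℝ} {ω : ℝ}
      (hω : ∀ x ∈ Set.Icc a b, ∀ y ∈ Set.Icc a b, dist x y < δ → dist (g x) (g y) < ω) :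
      ∀ x ∈ Set.Icc (p j) (p (j + 1)), ∀ y ∈ Set.Icc (p j) (p (j + 1)), |g x - g y| ≤ ω :=
    fun x hx y hy => (hω x (hsub hx) y (hsub hy)
      ((Real.dist_le_of_mem_Icc hx hy).trans_lt (hmesh j hj))).le
  exact abs_integral_mul_integral_div_sub_integral_mul_le (hP.2.2 j hj) (hg₁.mono hsub)
    (hg₂.mono hsub) (hosc hω₁) (hosc hω₂)

end IsPartition

theorem exists_abs_partitionError_lt_of_continuousOn {a b ε : ℝ} {g₁ g₂ : ℝ → ℝ}
    (hg₁ : ContinuousOn g₁ (Set.Icc a b)) (hg₂ : ContinuousOn g₂ (Set.Icc a b)) (hε : 0 < ε) :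
    ∃ δ > 0, ∀ (l : ℕ) (p : ℕ → ℝ), IsPartition a b l p → (∀ j, j < l → p (j + 1) - p j < δ) →
      |partitionError a b l p g₁ g₂| < ε := by
  have huc {g : ℝ → ℝ} (hg : ContinuousOn g (Set.Icc a b)) :=
    Metric.uniformContinuousOn_iff.1 (isCompact_Icc.uniformContinuousOn_of_continuous hg)
  obtain ⟨ω, hω, hωε⟩ := exists_pos_mul_lt hε (b - a)
  obtain ⟨δ₁, hδ₁, h₁⟩ := huc hg₁ ω hω
  -- the defect is bounded by a product of oscillations, so keeping that of `g₂` below `1` suffices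
  obtain ⟨δ₂, hδ₂, h₂⟩ := huc hg₂ 1 one_pos
  refine ⟨min δ₁ δ₂, lt_min hδ₁ hδ₂, fun l p hP hmesh => ?_⟩
  have hbound := hP.abs_partitionError_le_of_oscillation hg₁ hg₂
    (fun x hx y hy hxy => h₁ x hx y hy (hxy.trans_le (min_le_left _ _)))
    (fun x hx y hy hxy => h₂ x hx y hy (hxy.trans_le (min_le_right _ _))) hmesh
  linarith

/-- For `f₁, f₂ ∈ L²([0,1])`, the partition sums
`S_P = ∑_j (∫_{a_{j-1}}^{a_j} f₁)(∫_{a_{j-1}}^{a_j} f₂)/(a_j - a_{j-1})`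
converge to `∫_0^1 f₁ f₂` as the mesh `‖P‖ → 0`. -/
theorem partition_sum_tendsto_inner_product
    (f₁ f₂ : ℝ → ℝ)
    (hf₁ : MemLp f₁ 2 (volume.restrict (Set.Icc (0 : ℝ) 1)))
    (hf₂ : MemLp f₂ 2 (volume.restrict (Set.Icc (0 : ℝ) 1))) :
    ∀ ε > (0 : ℝ), ∃ δ > (0 : ℝ), ∀ (l : ℕ) (p : ℕ → ℝ),
      IsPartition 0 1 l p → (∀ j, j < l → p (j + 1) - p j < δ) →
      |(∑ j ∈ Finset.range l,
          (∫ x in p j..p (j + 1), f₁ x) * (∫ x in p j..p (j + 1), f₂ x) / (p (j + 1) - p j))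
        - ∫ x in (0:ℝ)..1, f₁ x * f₂ x| < ε := by
  intro ε hε
  set N : (ℝ → ℝ) → ℝ := fun f => √(∫ x in (0 : ℝ)..1, f x ^ 2)
  have hN (f : ℝ → ℝ) : 0 ≤ N f := Real.sqrt_nonneg _
  have hε3 : 0 < ε / 3 := by positivity
  obtain ⟨η₁, hη₁, hη₁ε⟩ := exists_pos_mul_lt hε3 (2 * N f₂)
  obtain ⟨g₁, hg₁c, hg₁, hfg₁⟩ :=
    hf₁.exists_continuous_sqrt_intervalIntegral_sq_sub_le zero_le_one hη₁
  obtain ⟨η₂, hη₂, hη₂ε⟩ := exists_pos_mul_lt hε3 (2 * N g₁)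
  obtain ⟨g₂, hg₂c, hg₂, hfg₂⟩ :=
    hf₂.exists_continuous_sqrt_intervalIntegral_sq_sub_le zero_le_one hη₂
  obtain ⟨δ, hδ, hcont⟩ :=
    exists_abs_partitionError_lt_of_continuousOn hg₁c.continuousOn hg₂c.continuousOn hε3
  refine ⟨δ, hδ, fun l p hP hmesh => ?_⟩
  have h₁ : |partitionError 0 1 l p f₁ f₂ - partitionError 0 1 l p g₁ f₂| < ε / 3 := by
    rw [← hP.partitionError_sub_left hf₁ hg₁ hf₂]
    calc _ ≤ 2 * (N (f₁ - g₁) * N f₂) := hP.abs_partitionError_le (hf₁.sub hg₁) hf₂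
      _ ≤ 2 * N f₂ * η₁ := by linarith [mul_le_mul_of_nonneg_right hfg₁ (hN f₂)]
      _ < ε / 3 := hη₁ε
  have h₂ : |partitionError 0 1 l p g₁ f₂ - partitionError 0 1 l p g₁ g₂| < ε / 3 := by
    rw [← hP.partitionError_sub_right hg₁ hf₂ hg₂]
    calc _ ≤ 2 * (N g₁ * N (f₂ - g₂)) := hP.abs_partitionError_le hg₁ (hf₂.sub hg₂)
      _ ≤ 2 * N g₁ * η₂ := by linarith [mul_le_mul_of_nonneg_left hfg₂ (hN g₁)]
      _ < ε / 3 := hη₂ε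
  have h₃ := hcont l p hP hmesh
  change |partitionError 0 1 l p f₁ f₂| < ε
  rw [abs_lt] at h₁ h₂ h₃ ⊢
  constructor <;> linarith
end

section
/- Let a = [w_1, …, w_m] be a sentence of m words over an alphabet S such that: (i) none of the words w_i is closed (the first letter of w_i differs from its last letter); (ii) every edge of the graph G_a is traversed at least twice by the sentence (each unordered pair {s, s'} occurring as a pair of consecutive letters in some word occurs at least twice in total, counted with multiplicity over all consecutive positions in all words); and (iii) for every i there exists j ≠ i such that the words w_i and w_j share an edge (G_{w_i} and G_{w_j} have a common edge). Then wt(a) ≤ ∑_{i=1}^m l(w_i)/2, where wt(a) is the number of distinct letters appearing in the sentence and l(w_i) is the length (number of letters) of w_i. -/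
open Finset

/-- The list of (undirected) edges traversed by a word, i.e. the unordered pairs of
consecutive letters. -/
def wordSteps {S : Type*} (L : List S) : List (Sym2 S) :=
  L.zipWith (fun a b => s(a, b)) L.tail

set_option linter.unusedSectionVars false
set_option maxHeartbeats 1000000

section
variable {S : Type*} [DecidableEq S]

lemma wordSteps_cons_cons (a b : S) (t : List S) :
    wordSteps (a :: b :: t) = s(a, b) :: wordSteps (b :: t) := rfl

lemma mem_of_mem_wordSteps : ∀ {L : List S} {e : Sym2 S}, e ∈ wordSteps L →
    ∀ v ∈ e, v ∈ L
  | [], e, he => by simp [wordSteps] at he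
  | [a], e, he => by simp [wordSteps] at he
  | a :: b :: t, e, he => by
    rw [wordSteps_cons_cons] at he
    intro v hv
    rcases List.mem_cons.1 he with h | h
    · subst h
      rcases Sym2.mem_iff.1 hv with h | h <;> simp [h]
    · have := mem_of_mem_wordSteps h v hv
      simp only [List.mem_cons] at this ⊢
      tauto

/-- Core walk lemma: if some letter of `L` lies in `A`, then the set of letters of `L`
outside `A` can be injected into a set `F` of steps of `L`, each containing a vertex
outside `A`. -/
lemma core_walk : ∀ (L : List S) (A : Finset S), (∃ v ∈ L, v ∈ A) →
    ∃ F : Finset (Sym2 S), F ⊆ (wordSteps L).toFinset ∧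
      (∀ e ∈ F, ∃ v, v ∈ e ∧ v ∉ A) ∧ (L.toFinset \ A).card ≤ F.card
  | [], A, h => by simp at h
  | [a], A, h => by
    refine ⟨∅, by simp, by simp, ?_⟩
    simp at h
    have he : ((a :: []).toFinset : Finset S) \ A = ∅ :=
      Finset.sdiff_eq_empty_iff_subset.2 (by intro x hx; simp at hx; simpa [hx] using h)
    rw [he]; simp
  | a :: b :: t, A, h => by
    by_cases ha : a ∈ A
    · obtain ⟨F, hF1, hF2, hF3⟩ := core_walk (b :: t) (insert b A)
        ⟨b, by simp, by simp⟩
      by_cases hb : b ∈ A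
      · refine ⟨F, ?_, ?_, ?_⟩
        · exact hF1.trans (by rw [wordSteps_cons_cons]; intro x hx; simp at hx ⊢; tauto)
        · intro e he
          obtain ⟨v, hv1, hv2⟩ := hF2 e he
          exact ⟨v, hv1, fun hvA => hv2 (by simp [hvA])⟩
        · refine le_trans (Finset.card_le_card ?_) hF3
          intro x hx
          simp only [Finset.mem_sdiff, List.mem_toFinset, List.mem_cons] at hx ⊢
          rcases hx with ⟨h1 | h1 | h1, h2⟩
          · exact absurd (h1 ▸ ha) h2
          · exact absurd (h1 ▸ hb) h2
          · exact ⟨Or.inr h1, by simp; push_neg; exact ⟨fun hbx => h2 (hbx ▸ hb), h2⟩⟩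
      · have hab : s(a, b) ∉ F := by
          intro hmem
          obtain ⟨v, hv1, hv2⟩ := hF2 _ hmem
          rcases Sym2.mem_iff.1 hv1 with h | h
          · exact hv2 (by simp [h, ha])
          · exact hv2 (by simp [h])
        refine ⟨insert s(a, b) F, ?_, ?_, ?_⟩
        · intro x hx
          rcases Finset.mem_insert.1 hx with h | h
          · subst h; rw [wordSteps_cons_cons]; simp
          · have := hF1 h
            rw [wordSteps_cons_cons]; simp at this ⊢; tauto
        · intro e he
          rcases Finset.mem_insert.1 he with h | h
          · exact ⟨b, by rw [h]; simp, hb⟩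
          · obtain ⟨v, hv1, hv2⟩ := hF2 e h
            exact ⟨v, hv1, fun hvA => hv2 (by simp [hvA])⟩
        · rw [Finset.card_insert_of_notMem hab]
          refine le_trans ?_ (Nat.add_le_add_right hF3 1)
          have hsub : ((a :: b :: t).toFinset : Finset S) \ A ⊆
              insert b (((b :: t).toFinset : Finset S) \ insert b A) := by
            intro x hx
            simp only [Finset.mem_sdiff, List.mem_toFinset, List.mem_cons,
              Finset.mem_insert] at hx ⊢
            rcases hx with ⟨h1 | h1 | h1, h2⟩
            · exact absurd (h1 ▸ ha) h2
            · exact Or.inl h1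
            · by_cases hxb : x = b
              · exact Or.inl hxb
              · exact Or.inr ⟨Or.inr h1, by push_neg; exact ⟨hxb, h2⟩⟩
          calc (((a :: b :: t).toFinset : Finset S) \ A).card
              ≤ (insert b (((b :: t).toFinset : Finset S) \ insert b A)).card :=
                Finset.card_le_card hsub
            _ ≤ (((b :: t).toFinset : Finset S) \ insert b A).card + 1 :=
                Finset.card_insert_le _ _
            _ = _ := by omega
    · -- a ∉ A, anchor is in b :: t
      have hanchor : ∃ v ∈ b :: t, v ∈ A := by
        obtain ⟨v, hv1, hv2⟩ := h
        rcases List.mem_cons.1 hv1 with h1 | h1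
        · exact absurd (h1 ▸ hv2) ha
        · exact ⟨v, h1, hv2⟩
      obtain ⟨F, hF1, hF2, hF3⟩ := core_walk (b :: t) A hanchor
      have hFsub : F ⊆ (wordSteps (a :: b :: t)).toFinset := by
        refine hF1.trans ?_
        rw [wordSteps_cons_cons]; intro x hx; simp at hx ⊢; tauto
      by_cases hat : a ∈ b :: t
      · refine ⟨F, hFsub, hF2, le_trans (Finset.card_le_card ?_) hF3⟩
        intro x hx
        simp only [Finset.mem_sdiff, List.mem_toFinset, List.mem_cons] at hx ⊢
        rcases hx with ⟨h1 | h1, h2⟩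
        · subst h1
          simp only [List.mem_cons] at hat
          exact ⟨hat, h2⟩
        · exact ⟨h1, h2⟩
      · have hab : s(a, b) ∉ F := by
          intro hmem
          have := mem_of_mem_wordSteps (List.mem_toFinset.1 (hF1 hmem)) a (by simp)
          exact hat this
        refine ⟨insert s(a, b) F, ?_, ?_, ?_⟩
        · intro x hx
          rcases Finset.mem_insert.1 hx with h1 | h1
          · subst h1; rw [wordSteps_cons_cons]; simp
          · exact hFsub h1
        · intro e he
          rcases Finset.mem_insert.1 he with h1 | h1
          · exact ⟨a, by rw [h1]; simp, ha⟩
          · exact hF2 e h1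
        · rw [Finset.card_insert_of_notMem hab]
          have hsub : ((a :: b :: t).toFinset : Finset S) \ A ⊆
              insert a (((b :: t).toFinset : Finset S) \ A) := by
            intro x hx
            simp only [Finset.mem_sdiff, List.mem_toFinset, List.mem_cons,
              Finset.mem_insert] at hx ⊢
            tauto
          calc (((a :: b :: t).toFinset : Finset S) \ A).card
              ≤ (insert a (((b :: t).toFinset : Finset S) \ A)).card :=
                Finset.card_le_card hsub
            _ ≤ (((b :: t).toFinset : Finset S) \ A).card + 1 := Finset.card_insert_le _ _
            _ ≤ F.card + 1 := Nat.add_le_add_right hF3 1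

lemma single_walk {L : List S} (hL : L ≠ []) :
    L.toFinset.card ≤ (wordSteps L).toFinset.card + 1 := by
  obtain ⟨a, t, rfl⟩ := List.exists_cons_of_ne_nil hL
  obtain ⟨F, hF1, _, hF3⟩ := core_walk (a :: t) {a} ⟨a, by simp, by simp⟩
  have h1 : (a :: t).toFinset.card ≤ (((a :: t).toFinset : Finset S) \ {a}).card + 1 := by
    have h2 : ((a :: t).toFinset : Finset S).card ≤ (((a :: t).toFinset : Finset S) \ {a}).card + ({a} : Finset S).card := by
      refine le_trans (Finset.card_le_card ?_) (Finset.card_union_le _ _)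
      intro x hx; simp at hx ⊢; tauto
    simpa using h2
  exact h1.trans (Nat.add_le_add_right (hF3.trans (Finset.card_le_card hF1)) 1)

lemma attach_walk (L : List S) (A : Finset S) (B : Finset (Sym2 S))
    (hanchor : ∃ v ∈ L, v ∈ A) (hB : ∀ e ∈ B, ∀ v ∈ e, v ∈ A) :
    (A ∪ L.toFinset).card + B.card ≤ A.card + (B ∪ (wordSteps L).toFinset).card := by
  obtain ⟨F, hF1, hF2, hF3⟩ := core_walk L A hanchor
  have hdisj : Disjoint B F := by
    rw [Finset.disjoint_left]
    intro e heB heF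
    obtain ⟨v, hv1, hv2⟩ := hF2 e heF
    exact hv2 (hB e heB v hv1)
  have h1 : (A ∪ L.toFinset).card ≤ A.card + F.card := by
    have : (A ∪ L.toFinset).card = A.card + (L.toFinset \ A).card := by
      rw [← Finset.card_union_of_disjoint (Finset.disjoint_sdiff), Finset.union_sdiff_self_eq_union]
    omega
  have h2 : B.card + F.card ≤ (B ∪ (wordSteps L).toFinset).card := by
    rw [← Finset.card_union_of_disjoint hdisj]
    exact Finset.card_le_card (Finset.union_subset_union_right hF1)
  omega

variable {m : ℕ} (w : Fin m → List S)

def Vset (T : Finset (Fin m)) : Finset S := T.biUnion fun i => (w i).toFinset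

def Eset (T : Finset (Fin m)) : Finset (Sym2 S) := T.biUnion fun i => (wordSteps (w i)).toFinset

lemma mem_Vset {T : Finset (Fin m)} {v : S} :
    v ∈ Vset w T ↔ ∃ i ∈ T, v ∈ w i := by simp [Vset]

lemma mem_Eset {T : Finset (Fin m)} {e : Sym2 S} :
    e ∈ Eset w T ↔ ∃ i ∈ T, e ∈ wordSteps (w i) := by simp [Eset]

lemma Eset_vertices {T : Finset (Fin m)} {e : Sym2 S} (he : e ∈ Eset w T)
    {v : S} (hv : v ∈ e) : v ∈ Vset w T := by
  obtain ⟨i, hi, he'⟩ := (mem_Eset w).1 he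
  exact (mem_Vset w).2 ⟨i, hi, mem_of_mem_wordSteps he' v hv⟩

/-- Growing a connected cluster of words: the number of vertices is at most
the number of edges plus one. -/
lemma grow (hne : ∀ i, w i ≠ []) (C : Finset (Fin m)) (i₀ : Fin m) (hi₀ : i₀ ∈ C)
    (hconn : ∀ U : Finset (Fin m), i₀ ∈ U → U ⊆ C → U ≠ C →
      ∃ x ∈ U, ∃ y ∈ C, y ∉ U ∧ ∃ v, v ∈ w x ∧ v ∈ w y) :
    (Vset w C).card ≤ (Eset w C).card + 1 := by
  suffices h : ∀ (k : ℕ) (U : Finset (Fin m)), i₀ ∈ U → U ⊆ C → (C \ U).card = k →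
      (Vset w U).card ≤ (Eset w U).card + 1 → (Vset w C).card ≤ (Eset w C).card + 1 by
    refine h (C \ {i₀}).card {i₀} (Finset.mem_singleton_self i₀)
      (Finset.singleton_subset_iff.2 hi₀) rfl ?_
    have hV : Vset w {i₀} = (w i₀).toFinset := Finset.singleton_biUnion
    have hE : Eset w {i₀} = (wordSteps (w i₀)).toFinset := Finset.singleton_biUnion
    rw [hV, hE]
    exact single_walk (hne i₀)
  intro k
  induction k with
  | zero =>
    intro U hU1 hU2 hU3 hU4
    have : U = C := Finset.Subset.antisymm hU2 fun x hx => by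
      by_contra hxU
      have : x ∈ C \ U := Finset.mem_sdiff.2 ⟨hx, hxU⟩
      rw [Finset.card_eq_zero.1 hU3] at this
      exact absurd this (Finset.notMem_empty x)
    exact this ▸ hU4
  | succ k ih =>
    intro U hU1 hU2 hU3 hU4
    have hUC : U ≠ C := by
      intro h
      rw [h, Finset.sdiff_self] at hU3
      simp at hU3
    obtain ⟨x, hxU, y, hyC, hyU, v, hv1, hv2⟩ := hconn U hU1 hU2 hUC
    have hcard : (C \ insert y U).card = k := by
      rw [Finset.sdiff_insert, Finset.card_erase_of_mem (Finset.mem_sdiff.2 ⟨hyC, hyU⟩), hU3]; omega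
    refine ih (insert y U) (Finset.mem_insert_of_mem hU1)
      (Finset.insert_subset hyC hU2) hcard ?_
    have hV : Vset w (insert y U) = (w y).toFinset ∪ Vset w U := Finset.biUnion_insert
    have hE : Eset w (insert y U) = (wordSteps (w y)).toFinset ∪ Eset w U :=
      Finset.biUnion_insert
    have hatt := attach_walk (w y) (Vset w U) (Eset w U)
      ⟨v, hv2, (mem_Vset w).2 ⟨x, hxU, hv1⟩⟩ (fun e he u hu => Eset_vertices w he hu)
    rw [hV, hE, Finset.union_comm ((w y).toFinset), Finset.union_comm ((wordSteps (w y)).toFinset)]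
    omega

lemma biUnion_union' {α β : Type*} [DecidableEq α] [DecidableEq β] (s t : Finset α)
    (f : α → Finset β) : (s ∪ t).biUnion f = s.biUnion f ∪ t.biUnion f := by
  ext x
  simp only [Finset.mem_biUnion, Finset.mem_union]
  constructor
  · rintro ⟨i, hi | hi, hx⟩
    · exact Or.inl ⟨i, hi, hx⟩
    · exact Or.inr ⟨i, hi, hx⟩
  · rintro (⟨i, hi, hx⟩ | ⟨i, hi, hx⟩)
    · exact ⟨i, Or.inl hi, hx⟩
    · exact ⟨i, Or.inr hi, hx⟩

/-- Crossing lemma for reflexive-transitive closures. -/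
lemma cross {α : Type*} {P : α → α → Prop} {U : Finset α} :
    ∀ {a b : α}, Relation.ReflTransGen P a b → a ∈ U → b ∉ U →
      ∃ x ∈ U, ∃ y, y ∉ U ∧ P x y := by
  intro a b h
  induction h with
  | refl => intro ha hb; exact absurd ha hb
  | @tail c d h' hstep ih =>
    intro ha hd
    by_cases hc : c ∈ U
    · exact ⟨c, hc, d, hd, hstep⟩
    · exact ih ha hc

lemma main_bound (hne : ∀ i, w i ≠ []) :
    ∀ T : Finset (Fin m),
      (∀ i ∈ T, ∃ j ∈ T, j ≠ i ∧ ∃ v, v ∈ w i ∧ v ∈ w j) →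
      2 * (Vset w T).card ≤ 2 * (Eset w T).card + T.card := by
  intro T
  induction T using Finset.strongInduction with
  | _ T ih =>
    intro hT
    rcases Finset.eq_empty_or_nonempty T with rfl | ⟨i₀, hi₀⟩
    · simp [Vset, Eset]
    classical
    set P : Fin m → Fin m → Prop := fun i j => j ∈ T ∧ i ≠ j ∧ ∃ v, v ∈ w i ∧ v ∈ w j with hP
    set C : Finset (Fin m) := T.filter (fun i => Relation.ReflTransGen P i₀ i) with hC
    have hCsub : C ⊆ T := Finset.filter_subset _ _
    have hmemC : ∀ i, i ∈ C ↔ i ∈ T ∧ Relation.ReflTransGen P i₀ i := by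
      intro i; simp [hC]
    have hi₀C : i₀ ∈ C := (hmemC i₀).2 ⟨hi₀, Relation.ReflTransGen.refl⟩
    -- closure of C under P-steps
    have hclosure : ∀ i ∈ C, ∀ j, P i j → j ∈ C := by
      intro i hiC j hPij
      exact (hmemC j).2 ⟨hPij.1, Relation.ReflTransGen.tail ((hmemC i).1 hiC).2 hPij⟩
    -- C has at least two elements
    have hC2 : 2 ≤ C.card := by
      obtain ⟨j, hjT, hji, v, hv1, hv2⟩ := hT i₀ hi₀
      have hjC : j ∈ C := hclosure i₀ hi₀C j ⟨hjT, fun h => hji h.symm, v, hv1, hv2⟩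
      exact Finset.one_lt_card.2 ⟨i₀, hi₀C, j, hjC, fun h => hji h.symm⟩
    set D : Finset (Fin m) := T \ C with hD
    have hDsub : D ⊆ T := Finset.sdiff_subset
    have hDC : Disjoint C D := Finset.disjoint_sdiff
    have hunion : C ∪ D = T := Finset.union_sdiff_of_subset hCsub
    -- if a word in C shares a vertex with a word in T, the latter is in C
    have hshareC : ∀ i ∈ C, ∀ j ∈ T, (∃ v, v ∈ w i ∧ v ∈ w j) → j ∈ C := by
      intro i hiC j hjT hsh
      by_cases hij : i = j
      · exact hij ▸ hiC
      · exact hclosure i hiC j ⟨hjT, hij, hsh⟩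
    -- D inherits the pairing hypothesis
    have hTD : ∀ i ∈ D, ∃ j ∈ D, j ≠ i ∧ ∃ v, v ∈ w i ∧ v ∈ w j := by
      intro i hiD
      obtain ⟨j, hjT, hji, v, hv1, hv2⟩ := hT i (hDsub hiD)
      refine ⟨j, ?_, hji, v, hv1, hv2⟩
      rw [hD, Finset.mem_sdiff]
      refine ⟨hjT, fun hjC => ?_⟩
      have : i ∈ C := hshareC j hjC i (hDsub hiD) ⟨v, hv2, hv1⟩
      exact (Finset.mem_sdiff.1 hiD).2 this
    have hDssub : D ⊂ T :=
      Finset.ssubset_iff_of_subset hDsub |>.2 ⟨i₀, hi₀, fun h => (Finset.mem_sdiff.1 h).2 hi₀C⟩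
    have hIH := ih D hDssub hTD
    -- connectivity hypothesis for grow
    have hconn : ∀ U : Finset (Fin m), i₀ ∈ U → U ⊆ C → U ≠ C →
        ∃ x ∈ U, ∃ y ∈ C, y ∉ U ∧ ∃ v, v ∈ w x ∧ v ∈ w y := by
      intro U hU1 hU2 hU3
      have hUC : U ⊂ C := hU2.ssubset_of_ne hU3
      obtain ⟨j, hjC, hjU⟩ := Finset.exists_of_ssubset hUC
      have hreach : Relation.ReflTransGen P i₀ j := ((hmemC j).1 hjC).2
      obtain ⟨x, hxU, y, hyU, hPxy⟩ := cross hreach hU1 hjU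
      exact ⟨x, hxU, y, hclosure x (hU2 hxU) y hPxy, hyU, hPxy.2.2⟩
    have hgrow := grow w hne C i₀ hi₀C hconn
    -- disjointness of vertex and edge sets
    have hVdisj : Disjoint (Vset w C) (Vset w D) := by
      rw [Finset.disjoint_left]
      intro v hvC hvD
      obtain ⟨i, hiC, hvi⟩ := (mem_Vset w).1 hvC
      obtain ⟨j, hjD, hvj⟩ := (mem_Vset w).1 hvD
      have : j ∈ C := hshareC i hiC j (hDsub hjD) ⟨v, hvi, hvj⟩
      exact (Finset.mem_sdiff.1 hjD).2 this
    have hEdisj : Disjoint (Eset w C) (Eset w D) := by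
      rw [Finset.disjoint_left]
      intro e heC heD
      obtain ⟨i, hiC, hei⟩ := (mem_Eset w).1 heC
      obtain ⟨j, hjD, hej⟩ := (mem_Eset w).1 heD
      obtain ⟨v, hv⟩ : ∃ v, v ∈ e := ⟨e.out.1, Sym2.out_fst_mem e⟩
      have : j ∈ C := hshareC i hiC j (hDsub hjD)
        ⟨v, mem_of_mem_wordSteps hei v hv, mem_of_mem_wordSteps hej v hv⟩
      exact (Finset.mem_sdiff.1 hjD).2 this
    have hVT : Vset w T = Vset w C ∪ Vset w D := by
      rw [← hunion]; exact biUnion_union' _ _ _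
    have hET : Eset w T = Eset w C ∪ Eset w D := by
      rw [← hunion]; exact biUnion_union' _ _ _
    have hVcard : (Vset w T).card = (Vset w C).card + (Vset w D).card := by
      rw [hVT, Finset.card_union_of_disjoint hVdisj]
    have hEcard : (Eset w T).card = (Eset w C).card + (Eset w D).card := by
      rw [hET, Finset.card_union_of_disjoint hEdisj]
    have hTcard : T.card = C.card + D.card := by
      rw [← hunion, Finset.card_union_of_disjoint hDC]
    omega

lemma wordSteps_length (L : List S) : (wordSteps L).length = L.length - 1 := by
  simp [wordSteps]

lemma length_ge_two {L : List S} (h : L.head? ≠ L.getLast?) : 2 ≤ L.length := by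
  match L with
  | [] => simp at h
  | [a] => simp at h
  | a :: b :: t => simp

end

/-- Let `a = [w_1,…,w_m]` be a sentence in which no word is closed,
every edge of `G_a` is traversed at least twice (with multiplicity over all words),
and every word shares an edge with some other word.  Then
`wt(a) ≤ ∑_i l(w_i)/2`. -/
theorem sentence_weight_le_half_total_length
    {S : Type*} [DecidableEq S] (m : ℕ) (w : Fin m → List S)
    (hclosed : ∀ i, (w i).head? ≠ (w i).getLast?)
    (htwice : ∀ e : Sym2 S, (∃ i, e ∈ wordSteps (w i)) →
      2 ≤ ∑ i, (wordSteps (w i)).count e)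
    (hshare : ∀ i, ∃ j, j ≠ i ∧ ∃ e, e ∈ wordSteps (w i) ∧ e ∈ wordSteps (w j)) :
    ((Finset.univ.biUnion fun i => (w i).toFinset).card : ℝ)
      ≤ ∑ i, ((w i).length : ℝ) / 2 := by
  have hlen : ∀ i, 2 ≤ (w i).length := fun i => length_ge_two (hclosed i)
  have hne : ∀ i, w i ≠ [] := fun i => by
    have := hlen i
    intro h; rw [h] at this; simp at this
  -- the key combinatorial bound
  have hmain : 2 * (Vset w Finset.univ).card ≤ 2 * (Eset w Finset.univ).card + m := by
    have := main_bound w hne Finset.univ ?_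
    · simpa using this
    · intro i _
      obtain ⟨j, hji, e, he1, he2⟩ := hshare i
      obtain ⟨v, hv⟩ : ∃ v, v ∈ e := ⟨e.out.1, Sym2.out_fst_mem e⟩
      exact ⟨j, Finset.mem_univ j, hji, v, mem_of_mem_wordSteps he1 v hv,
        mem_of_mem_wordSteps he2 v hv⟩
  -- edge count: each edge is traversed at least twice
  have hedge : 2 * (Eset w Finset.univ).card ≤ ∑ i, (wordSteps (w i)).length := by
    have h1 : ∀ i, (wordSteps (w i)).length = ∑ e ∈ Eset w Finset.univ,
        (wordSteps (w i)).count e := by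
      intro i
      have hms := Multiset.toFinset_sum_count_eq (↑(wordSteps (w i)) : Multiset (Sym2 S))
      simp only [List.toFinset_coe, Multiset.coe_count, Multiset.coe_card] at hms
      rw [← hms]
      refine Finset.sum_subset ?_ ?_
      · intro e he
        simp only [Eset, Finset.mem_biUnion]
        exact ⟨i, Finset.mem_univ i, he⟩
      · intro e _ he
        exact List.count_eq_zero.2 (fun h => he (List.mem_toFinset.2 h))
    calc 2 * (Eset w Finset.univ).card = ∑ _e ∈ Eset w Finset.univ, 2 := by
          rw [Finset.sum_const]; ring
      _ ≤ ∑ e ∈ Eset w Finset.univ, ∑ i, (wordSteps (w i)).count e := by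
          refine Finset.sum_le_sum fun e he => htwice e ?_
          simp only [Eset, Finset.mem_biUnion] at he
          obtain ⟨i, _, hei⟩ := he
          exact ⟨i, List.mem_toFinset.1 hei⟩
      _ = ∑ i, ∑ e ∈ Eset w Finset.univ, (wordSteps (w i)).count e := Finset.sum_comm
      _ = ∑ i, (wordSteps (w i)).length := by
          exact Finset.sum_congr rfl fun i _ => (h1 i).symm
  have hsum : ∑ i, (wordSteps (w i)).length + m = ∑ i, (w i).length := by
    have : ∀ i ∈ Finset.univ, (wordSteps (w i)).length = (w i).length - 1 :=
      fun i _ => wordSteps_length (w i)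
    rw [Finset.sum_congr rfl this]
    have : ∑ i : Fin m, ((w i).length - 1 + 1) = ∑ i, (w i).length :=
      Finset.sum_congr rfl fun i _ => by have := hlen i; omega
    rw [← this, Finset.sum_add_distrib]
    simp
  have hfinal : 2 * (Finset.univ.biUnion fun i => (w i).toFinset).card ≤
      ∑ i, (w i).length := by
    have hV : (Vset w Finset.univ).card =
        (Finset.univ.biUnion fun i => (w i).toFinset).card := rfl
    omega
  have hcast : ((Finset.univ.biUnion fun i => (w i).toFinset).card : ℝ) * 2 ≤
      (∑ i, (w i).length : ℕ) := by
    exact_mod_cast by omega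
  rw [show ∑ i, ((w i).length : ℝ) / 2 = (∑ i, ((w i).length : ℝ)) / 2 by
    rw [Finset.sum_div]]
  have : ((∑ i, (w i).length : ℕ) : ℝ) = ∑ i, ((w i).length : ℝ) := by push_cast; rfl
  linarith [hcast, this ▸ hcast]
end

section
/- Let w = (j_0, j_1, …, j_l) be a walk of length l (a word of l+1 letters) over an alphabet S with j_0 ≠ j_l, and suppose that every edge of G_w is traversed at least twice (each unordered pair {j_t, j_{t+1}}, 0 ≤ t ≤ l−1, occurs at least twice among the l consecutive steps of w). Then the number of distinct edges |E_w| satisfies |E_w| ≤ (l−1)/2; equivalently, at least one edge is traversed at least three times. -/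
open Finset

/-- Let `w = (j_0,…,j_l)` be a walk with `j_0 ≠ j_l` in which every
edge is traversed at least twice.  Then the number of distinct edges satisfies
`|E_w| ≤ (l-1)/2`. -/
theorem non_closed_walk_edge_count
    {S : Type*} [DecidableEq S] (l : ℕ) (w : ℕ → S)
    (hne : w 0 ≠ w l)
    (htwice : ∀ e : Sym2 S, (∃ t, t < l ∧ s(w t, w (t + 1)) = e) →
      2 ≤ ((Finset.range l).filter (fun t => s(w t, w (t + 1)) = e)).card) :
    (((Finset.range l).image (fun t => s(w t, w (t + 1)))).card : ℝ)
      ≤ ((l : ℝ) - 1) / 2 := by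
  classical
  set f : ℕ → Sym2 S := fun t => s(w t, w (t + 1)) with hf
  set E := (Finset.range l).image f with hE
  -- each e in E satisfies the hypothesis
  have hmem : ∀ e ∈ E, 2 ≤ ((Finset.range l).filter (fun t => f t = e)).card := by
    intro e he
    rcases Finset.mem_image.mp he with ⟨t, ht, hte⟩
    exact htwice e ⟨t, Finset.mem_range.mp ht, hte⟩
  have hsum : ∑ e ∈ E, ((Finset.range l).filter (fun t => f t = e)).card = l := by
    rw [← Finset.card_eq_sum_card_image f (Finset.range l), Finset.card_range]
  have h2E : 2 * E.card ≤ l := by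
    calc 2 * E.card = ∑ e ∈ E, 2 := by rw [Finset.sum_const, smul_eq_mul, mul_comm]
    _ ≤ ∑ e ∈ E, ((Finset.range l).filter (fun t => f t = e)).card :=
        Finset.sum_le_sum hmem
    _ = l := hsum
  -- rule out equality via parity
  have hne2 : 2 * E.card ≠ l := by
    intro heq
    -- then every multiplicity is exactly 2
    have hexact : ∀ e ∈ E, ((Finset.range l).filter (fun t => f t = e)).card = 2 := by
      intro e he
      by_contra hc
      have hlt : 2 < ((Finset.range l).filter (fun t => f t = e)).card :=
        lt_of_le_of_ne (hmem e he) (Ne.symm hc)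
      have : (∑ e ∈ E, 2) < ∑ e ∈ E, ((Finset.range l).filter (fun t => f t = e)).card :=
        Finset.sum_lt_sum hmem ⟨e, he, hlt⟩
      rw [hsum, Finset.sum_const, smul_eq_mul, mul_comm] at this
      omega
    set v := w 0 with hv
    set h : Sym2 S → ℕ := Sym2.lift ⟨fun a b => (if a = v then 1 else 0) + (if b = v then 1 else 0), fun a b => add_comm _ _⟩ with hh
    have hsplit : ∑ t ∈ Finset.range l, h (f t)
        = ∑ e ∈ E, ∑ t ∈ (Finset.range l).filter (fun t => f t = e), h (f t) := by
      exact (Finset.sum_fiberwise_of_maps_to (fun x hx => Finset.mem_image_of_mem f hx) _).symm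
    have heven : ∑ t ∈ Finset.range l, h (f t) = ∑ e ∈ E, 2 * h e := by
      rw [hsplit]
      refine Finset.sum_congr rfl fun e he => ?_
      have : ∑ t ∈ (Finset.range l).filter (fun t => f t = e), h (f t)
          = ∑ t ∈ (Finset.range l).filter (fun t => f t = e), h e := by
        refine Finset.sum_congr rfl fun t ht => ?_
        rw [(Finset.mem_filter.mp ht).2]
      rw [this, Finset.sum_const, hexact e he, smul_eq_mul]
    -- parity: odd
    obtain ⟨k, rfl⟩ : ∃ k, l = k + 1 := by
      cases l with
      | zero => exact absurd rfl hne
      | succ k => exact ⟨k, rfl⟩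
    have hval : ∀ t, h (f t) = (if w t = v then 1 else 0) + (if w (t+1) = v then 1 else 0) := by
      intro t; simp [hh, hf]
    have hodd : ∑ t ∈ Finset.range (k+1), h (f t)
        = 2 * (∑ t ∈ Finset.range k, (if w (t+1) = v then 1 else 0)) + 1 := by
      have : ∑ t ∈ Finset.range (k+1), h (f t)
          = (∑ t ∈ Finset.range (k+1), (if w t = v then 1 else 0))
            + ∑ t ∈ Finset.range (k+1), (if w (t+1) = v then 1 else 0) := by
        rw [← Finset.sum_add_distrib]
        exact Finset.sum_congr rfl fun t _ => hval t
      rw [this, Finset.sum_range_succ' (fun t => if w t = v then 1 else 0) k,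
        Finset.sum_range_succ (fun t => if w (t+1) = v then 1 else 0) k]
      have h0 : (if w 0 = v then 1 else 0) = 1 := by simp [hv]
      have hl : (if w (k+1) = v then (1:ℕ) else 0) = 0 := by
        simp only [hv]; rw [if_neg (Ne.symm hne)]
      rw [h0, hl]; ring
    rw [heven] at hodd
    have : (∑ e ∈ E, 2 * h e) % 2 = 0 := by
      rw [Finset.sum_nat_mod]
      simp
    omega
  have hfin : 2 * E.card + 1 ≤ l := by omega
  have : (2 * E.card + 1 : ℝ) ≤ l := by exact_mod_cast hfin
  push_cast at this ⊢
  linarith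
end
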